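/- arXiv:1309.1766 — 5 statements merged into one kernel-verified Lean document; each statement's English description precedes it below -/
import Mathlib

section
/- For every even characteristic 𝔪 = (𝔪¹,𝔪²) ∈ {0,1}^{2n} and every Z in the Siegel upper half-space H_n, the square of the theta constant of the first kind satisfies θ[𝔪](Z)² = Σ_{a ∈ 𝔽₂ⁿ} (−1)^{⟨a,𝔪²⟩} f_{a+𝔪¹}(Z) · f_a(Z), where f_a(Z) = θ[a,0](2Z) are the theta constants of the second kind. -/
open Complex Matrix

noncomputable section

attribute [local instance] Matrix.normedAddCommGroup Matrix.normedSpace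

/-- The Siegel upper half-space of degree `n`: symmetric complex matrices with
positive definite imaginary part. -/
def Siegel (n : ℕ) : Set (Matrix (Fin n) (Fin n) ℂ) :=
  {Z | Z.IsSymm ∧ (Matrix.of fun i j => (Z i j).im).PosDef}
/-- The shifted lattice vector `g + a/2`. -/
def thetaVec (n : ℕ) (a : Fin n → ZMod 2) (g : Fin n → ℤ) : Fin n → ℂ :=
  fun i => (g i : ℂ) + ((a i).val : ℂ) / 2

/-- A single term `exp(2πi Z[g+a/2])` of the theta series of the second kind. -/
def thetaTerm (n : ℕ) (a : Fin n → ZMod 2) (Z : Matrix (Fin n) (Fin n) ℂ)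
    (g : Fin n → ℤ) : ℂ :=
  Complex.exp (2 * (Real.pi : ℂ) * Complex.I *
    (thetaVec n a g ⬝ᵥ Z.mulVec (thetaVec n a g)))

/-- The theta constant of the second kind `f_a(Z) = Σ_g exp(2πi Z[g+a/2])`. -/
def thetaSecond (n : ℕ) (a : Fin n → ZMod 2) (Z : Matrix (Fin n) (Fin n) ℂ) : ℂ :=
  ∑' g : Fin n → ℤ, thetaTerm n a Z g

/-- A single term of the theta series of the first kind with characteristic `m`. -/
def thetaFirstTerm (n : ℕ) (m : (Fin n → ZMod 2) × (Fin n → ZMod 2))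
    (Z : Matrix (Fin n) (Fin n) ℂ) (g : Fin n → ℤ) : ℂ :=
  Complex.exp ((Real.pi : ℂ) * Complex.I *
    ((thetaVec n m.1 g ⬝ᵥ Z.mulVec (thetaVec n m.1 g)) +
      ∑ i, thetaVec n m.1 g i * ((m.2 i).val : ℂ)))

/-- The theta constant of the first kind `θ[m](Z)`. -/
def thetaFirst (n : ℕ) (m : (Fin n → ZMod 2) × (Fin n → ZMod 2))
    (Z : Matrix (Fin n) (Fin n) ℂ) : ℂ :=
  ∑' g : Fin n → ℤ, thetaFirstTerm n m Z g

/-! Write `θ[m](Z)²` as a double sum over `(g, h) ∈ ℤⁿ × ℤⁿ` and put `x = g + m¹/2`,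
`y = h + m¹/2`. The substitution `x = u + v`, `y = u - v` is a bijection onto the pairs with
`u ∈ ℤⁿ + (a + m¹)/2`, `v ∈ ℤⁿ + a/2`, `a ∈ 𝔽₂ⁿ` (namely `a ≡ g + h mod 2`). The parallelogram
law `Z[u + v] + Z[u - v] = 2 Z[u] + 2 Z[v]` turns each product of two terms of `θ[m]` into a term
of `f_{a+m¹} f_a`, up to the factor `exp(2πi ⟨u, m²⟩) = (-1)^⟨a + m¹, m²⟩ = (-1)^⟨a, m²⟩`, the last
step because `m` is even. Since `Im Z` is positive definite all series converge absolutely, which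
justifies the rearrangement. -/

lemma summable_prod_pi_of_nonneg {α : Type*} {n : ℕ} {f : Fin n → α → ℝ}
    (hf₀ : ∀ i x, 0 ≤ f i x) (hf : ∀ i, Summable (f i)) :
    Summable fun g : Fin n → α => ∏ i, f i (g i) := by
  induction n with
  | zero => exact Summable.of_finite
  | succ n ih =>
    rw [← (Fin.consEquiv fun _ => α).summable_iff]
    refine ((hf 0).mul_of_nonneg (ih (fun i => hf₀ i.succ) fun i => hf i.succ)
      (hf₀ 0) fun g => Finset.prod_nonneg fun i _ => hf₀ i.succ (g i)).congr fun p => ?_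
    simp only [Fin.consEquiv, Equiv.coe_fn_mk, Fin.prod_univ_succ,
      Function.comp_apply, Fin.cons_zero, Fin.cons_succ]

lemma summable_exp_neg_mul_sum_add_sq {n : ℕ} {c : ℝ} (hc : 0 < c) (d : Fin n → ℝ) :
    Summable fun g : Fin n → ℤ => Real.exp (-c * ∑ i, ((g i : ℝ) + d i) ^ 2) := by
  simp_rw [Finset.mul_sum, Real.exp_sum]
  refine summable_prod_pi_of_nonneg (f := fun i (k : ℤ) => Real.exp (-c * ((k : ℝ) + d i) ^ 2))
    (fun _ _ => (Real.exp_pos _).le) fun i => ?_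
  refine (HurwitzKernelBounds.summable_f_int 0 (d i) (t := c / Real.pi) (by positivity)).congr
    fun k => ?_
  have hπ : Real.pi ≠ 0 := Real.pi_ne_zero
  simp only [HurwitzKernelBounds.f_int, pow_zero, one_mul]
  congr 1
  field_simp

lemma exists_pos_mul_norm_sq_le {E : Type*} [NormedAddCommGroup E] [NormedSpace ℝ E]
    [FiniteDimensional ℝ E] {Q : E → ℝ} (hQ : Continuous Q)
    (hQ_smul : ∀ (t : ℝ) x, Q (t • x) = t ^ 2 * Q x) (hQ_pos : ∀ x ≠ 0, 0 < Q x) :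
    ∃ c > 0, ∀ x, c * ‖x‖ ^ 2 ≤ Q x := by
  have hQ₀ : Q 0 = 0 := by simpa using hQ_smul 0 0
  rcases subsingleton_or_nontrivial E with hE | hE
  · exact ⟨1, one_pos, fun x => by simp [Subsingleton.elim x 0, hQ₀]⟩
  obtain ⟨x₀, hx₀, hmin⟩ := (isCompact_sphere (0 : E) 1).exists_isMinOn
    (NormedSpace.sphere_nonempty.2 zero_le_one) hQ.continuousOn
  refine ⟨Q x₀, hQ_pos x₀ (ne_zero_of_mem_unit_sphere ⟨x₀, hx₀⟩), fun x => ?_⟩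
  rcases eq_or_ne x 0 with rfl | hx
  · simp [hQ₀]
  have hunit : ‖x‖⁻¹ • x ∈ Metric.sphere (0 : E) 1 := by simp [norm_smul, hx]
  have h : Q x₀ ≤ Q (‖x‖⁻¹ • x) := hmin hunit
  rw [hQ_smul, inv_pow, le_inv_mul_iff₀ (by positivity)] at h
  linarith

lemma Matrix.PosDef.exists_pos_mul_sum_sq_le {n : ℕ} {Y : Matrix (Fin n) (Fin n) ℝ}
    (hY : Y.PosDef) : ∃ c > 0, ∀ x : Fin n → ℝ, c * ∑ i, x i ^ 2 ≤ x ⬝ᵥ Y *ᵥ x := by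
  obtain ⟨c, hc, hle⟩ := exists_pos_mul_norm_sq_le (E := EuclideanSpace ℝ (Fin n))
    (Q := fun x => x.ofLp ⬝ᵥ Y *ᵥ x.ofLp) (by fun_prop)
    (fun t x => by simp only [WithLp.ofLp_smul, mulVec_smul, smul_dotProduct, dotProduct_smul,
      smul_eq_mul]; ring)
    (fun x hx => by simpa using hY.dotProduct_mulVec_pos ((WithLp.ofLp_injective 2).ne hx))
  exact ⟨c, hc, fun x => by simpa [EuclideanSpace.real_norm_sq_eq] using hle (WithLp.toLp 2 x)⟩

lemma Matrix.PosDef.summable_exp_neg_dotProduct_mulVec_add {n : ℕ}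
    {Y : Matrix (Fin n) (Fin n) ℝ} (hY : Y.PosDef) (d : Fin n → ℝ) :
    Summable fun g : Fin n → ℤ =>
      Real.exp (-((fun i => (g i : ℝ) + d i) ⬝ᵥ Y *ᵥ fun i => (g i : ℝ) + d i)) := by
  obtain ⟨c, hc, hle⟩ := hY.exists_pos_mul_sum_sq_le
  refine (summable_exp_neg_mul_sum_add_sq hc d).of_nonneg_of_le (fun _ => (Real.exp_pos _).le)
    fun g => Real.exp_le_exp.2 ?_
  linarith [hle fun i => (g i : ℝ) + d i]

lemma im_ofReal_dotProduct_mulVec_ofReal {ι : Type*} [Fintype ι] (Z : Matrix ι ι ℂ)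
    (x : ι → ℝ) :
    ((fun i => (x i : ℂ)) ⬝ᵥ Z *ᵥ fun i => (x i : ℂ)).im = x ⬝ᵥ Z.map im *ᵥ x := by
  simp [dotProduct, mulVec, Complex.im_sum, Finset.mul_sum]

lemma thetaVec_eq_ofReal (n : ℕ) (a : Fin n → ZMod 2) (g : Fin n → ℤ) :
    thetaVec n a g = fun i => (((g i : ℝ) + (a i).val / 2 : ℝ) : ℂ) := by
  ext i
  push_cast [thetaVec]
  rfl

lemma norm_thetaTerm (n : ℕ) (a : Fin n → ZMod 2) (Z : Matrix (Fin n) (Fin n) ℂ)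
    (g : Fin n → ℤ) :
    ‖thetaTerm n a Z g‖ = Real.exp (-((fun i => (g i : ℝ) + (a i).val / 2) ⬝ᵥ
      ((2 * Real.pi) • Z.map im) *ᵥ fun i => (g i : ℝ) + (a i).val / 2)) := by
  rw [thetaTerm, norm_exp, thetaVec_eq_ofReal, smul_mulVec, dotProduct_smul, smul_eq_mul,
    ← im_ofReal_dotProduct_mulVec_ofReal]
  simp [mul_re]

lemma norm_thetaFirstTerm (n : ℕ) (m : (Fin n → ZMod 2) × (Fin n → ZMod 2))
    (Z : Matrix (Fin n) (Fin n) ℂ) (g : Fin n → ℤ) :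
    ‖thetaFirstTerm n m Z g‖ = Real.exp (-((fun i => (g i : ℝ) + (m.1 i).val / 2) ⬝ᵥ
      (Real.pi • Z.map im) *ᵥ fun i => (g i : ℝ) + (m.1 i).val / 2)) := by
  rw [thetaFirstTerm, norm_exp, thetaVec_eq_ofReal, smul_mulVec, dotProduct_smul, smul_eq_mul,
    ← im_ofReal_dotProduct_mulVec_ofReal]
  simp [mul_re, Complex.im_sum, -ZMod.natCast_val]

lemma summable_norm_thetaTerm {n : ℕ} {Z : Matrix (Fin n) (Fin n) ℂ} (hZ : Z ∈ Siegel n)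
    (a : Fin n → ZMod 2) : Summable fun g => ‖thetaTerm n a Z g‖ := by
  simp_rw [norm_thetaTerm]
  exact (hZ.2.smul (by positivity : 0 < 2 * Real.pi)).summable_exp_neg_dotProduct_mulVec_add _

lemma summable_norm_thetaFirstTerm {n : ℕ} {Z : Matrix (Fin n) (Fin n) ℂ} (hZ : Z ∈ Siegel n)
    (m : (Fin n → ZMod 2) × (Fin n → ZMod 2)) : Summable fun g => ‖thetaFirstTerm n m Z g‖ := by
  simp_rw [norm_thetaFirstTerm]
  exact (hZ.2.smul Real.pi_pos).summable_exp_neg_dotProduct_mulVec_add _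

lemma ZMod.val_add_two (x y : ZMod 2) :
    ((x + y).val : ℤ) = x.val + y.val - 2 * x.val * y.val := by
  revert x y
  decide

lemma neg_one_pow_sum_val_add_mul_val {ι : Type*} [Fintype ι] (a b w : ι → ZMod 2)
    (hbw : (∑ i, (b i).val * (w i).val) % 2 = 0) :
    (-1 : ℂ) ^ (∑ i, ((a + b) i).val * (w i).val) = (-1) ^ (∑ i, (a i).val * (w i).val) := by
  rw [neg_one_pow_eq_pow_mod_two, neg_one_pow_eq_pow_mod_two (∑ i, (a i).val * _)]
  congr 1
  rw [← ZMod.natCast_eq_natCast_iff']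
  have hbw' : ((∑ i, (b i).val * (w i).val : ℕ) : ZMod 2) = 0 :=
    (ZMod.natCast_eq_zero_iff _ 2).2 (Nat.dvd_of_mod_eq_zero hbw)
  push_cast [ZMod.natCast_zmod_val] at hbw' ⊢
  simp only [Pi.add_apply, add_mul, Finset.sum_add_distrib, hbw', add_zero]

/-- In one coordinate, `(a, G, H) ↦ (g, h)` with `g + b/2 = u + v` and `h + b/2 = u - v`, where
`u = G + (a + b)/2` and `v = H + a/2`; the parity `a` is recovered as `g + h mod 2`. -/
def latticeAddSubEquiv (b : ZMod 2) : ZMod 2 × ℤ × ℤ ≃ ℤ × ℤ where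
  toFun q := (q.2.1 + q.2.2 + q.1.val * (1 - b.val), q.2.1 - q.2.2 - q.1.val * b.val)
  invFun p :=
    let a : ZMod 2 := ((p.1 + p.2 : ℤ) : ZMod 2)
    (a, (p.1 + p.2 - a.val) / 2 + a.val * b.val, (p.1 - p.2 - a.val) / 2)
  left_inv := by
    rintro ⟨a, G, H⟩
    have ha : a.val < 2 := a.val_lt
    obtain hb | hb : b.val = 0 ∨ b.val = 1 := by have := b.val_lt; omega
    all_goals
      have hparity :
          (((G + H + a.val * (1 - b.val) + (G - H - a.val * b.val) : ℤ)) : ZMod 2) = a := by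
        apply ZMod.val_injective
        rw [← Int.natCast_inj, ZMod.val_intCast, hb]
        push_cast
        omega
      simp only [hparity, Prod.mk.injEq, true_and]
      rw [hb]
      push_cast
      omega
  right_inv := by
    rintro ⟨g, h⟩
    have hparity : ((((g + h : ℤ) : ZMod 2)).val : ℤ) = (g + h) % 2 := ZMod.val_intCast _
    obtain hb | hb : b.val = 0 ∨ b.val = 1 := by have := b.val_lt; omega
    all_goals
      simp only [hb, Prod.mk.injEq, Nat.cast_zero, Nat.cast_one, mul_zero, mul_one, sub_zero]
      omega

def latticeAddSubPiEquiv {ι : Type*} (b : ι → ZMod 2) :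
    (ι → ZMod 2) × (ι → ℤ) × (ι → ℤ) ≃ (ι → ℤ) × (ι → ℤ) :=
  ((Equiv.refl _).prodCongr (Equiv.arrowProdEquivProdArrow _ _ _).symm).trans <|
    (Equiv.arrowProdEquivProdArrow _ _ _).symm.trans <|
      (Equiv.piCongrRight fun i => latticeAddSubEquiv (b i)).trans
        (Equiv.arrowProdEquivProdArrow _ _ _)

lemma latticeAddSubPiEquiv_apply {ι : Type*} (b a : ι → ZMod 2) (G H : ι → ℤ) :
    latticeAddSubPiEquiv b (a, G, H) =
      (fun i => G i + H i + (a i).val * (1 - (b i).val),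
        fun i => G i - H i - (a i).val * (b i).val) :=
  rfl

lemma thetaVec_latticeAddSubPiEquiv_fst (n : ℕ) (b a : Fin n → ZMod 2) (G H : Fin n → ℤ) :
    thetaVec n b (latticeAddSubPiEquiv b (a, G, H)).1 =
      thetaVec n (a + b) G + thetaVec n a H := by
  ext i
  have := congrArg (fun k : ℤ => (k : ℂ)) (ZMod.val_add_two (a i) (b i))
  push_cast at this
  simp only [latticeAddSubPiEquiv_apply, thetaVec, Pi.add_apply, this]
  push_cast
  ring

lemma thetaVec_latticeAddSubPiEquiv_snd (n : ℕ) (b a : Fin n → ZMod 2) (G H : Fin n → ℤ) :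
    thetaVec n b (latticeAddSubPiEquiv b (a, G, H)).2 =
      thetaVec n (a + b) G - thetaVec n a H := by
  ext i
  have := congrArg (fun k : ℤ => (k : ℂ)) (ZMod.val_add_two (a i) (b i))
  push_cast at this
  simp only [latticeAddSubPiEquiv_apply, thetaVec, Pi.add_apply, Pi.sub_apply, this]
  push_cast
  ring

lemma cexp_add_mul_cexp_sub {ι : Type*} [Fintype ι] (Z : Matrix ι ι ℂ) (u v w : ι → ℂ) :
    cexp (Real.pi * I * ((u + v) ⬝ᵥ Z *ᵥ (u + v) + (u + v) ⬝ᵥ w)) *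
        cexp (Real.pi * I * ((u - v) ⬝ᵥ Z *ᵥ (u - v) + (u - v) ⬝ᵥ w)) =
      cexp (2 * Real.pi * I * (u ⬝ᵥ Z *ᵥ u)) * cexp (2 * Real.pi * I * (v ⬝ᵥ Z *ᵥ v)) *
        cexp (2 * Real.pi * I * (u ⬝ᵥ w)) := by
  simp only [← Complex.exp_add, mulVec_add, mulVec_sub, dotProduct_add, dotProduct_sub,
    add_dotProduct, sub_dotProduct]
  ring_nf

lemma cexp_two_pi_I_mul_thetaVec_dotProduct (n : ℕ) (a w : Fin n → ZMod 2) (G : Fin n → ℤ) :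
    cexp (2 * Real.pi * I * (thetaVec n a G ⬝ᵥ fun i => ((w i).val : ℂ))) =
      (-1) ^ (∑ i, (a i).val * (w i).val) := by
  have hsplit : 2 * Real.pi * I * (thetaVec n a G ⬝ᵥ fun i => ((w i).val : ℂ)) =
      ((∑ i, G i * (w i).val : ℤ) : ℂ) * (2 * Real.pi * I) +
        ((∑ i, (a i).val * (w i).val : ℕ) : ℂ) * (Real.pi * I) := by
    push_cast
    simp only [dotProduct, thetaVec, Finset.mul_sum, Finset.sum_mul, ← Finset.sum_add_distrib]
    exact Finset.sum_congr rfl fun i _ => by ring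
  rw [hsplit, Complex.exp_add, Complex.exp_int_mul_two_pi_mul_I, one_mul, Complex.exp_nat_mul,
    Complex.exp_pi_mul_I]

lemma thetaFirstTerm_mul_thetaFirstTerm_latticeAddSubPiEquiv {n : ℕ}
    {m : (Fin n → ZMod 2) × (Fin n → ZMod 2)} (hm : (∑ i, (m.1 i).val * (m.2 i).val) % 2 = 0)
    (Z : Matrix (Fin n) (Fin n) ℂ) (a : Fin n → ZMod 2) (G H : Fin n → ℤ) :
    thetaFirstTerm n m Z (latticeAddSubPiEquiv m.1 (a, G, H)).1 *
        thetaFirstTerm n m Z (latticeAddSubPiEquiv m.1 (a, G, H)).2 =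
      (-1) ^ (∑ i, (a i).val * (m.2 i).val) * (thetaTerm n (a + m.1) Z G * thetaTerm n a Z H) := by
  rw [thetaFirstTerm, thetaFirstTerm, thetaVec_latticeAddSubPiEquiv_fst,
    thetaVec_latticeAddSubPiEquiv_snd]
  refine (cexp_add_mul_cexp_sub Z _ _ fun i => ((m.2 i).val : ℂ)).trans ?_
  rw [cexp_two_pi_I_mul_thetaVec_dotProduct, neg_one_pow_sum_val_add_mul_val _ _ _ hm,
    thetaTerm, thetaTerm]
  ring

/-- For every even characteristic `m = (m¹, m²)` the square of the theta constant of
the first kind is `θ[m](Z)² = Σ_{a ∈ 𝔽₂ⁿ} (−1)^⟨a,m²⟩ f_{a+m¹}(Z) f_a(Z)`. -/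
theorem thetaFirst_sq_eq_sum_thetaSecond (n : ℕ)
    (m : (Fin n → ZMod 2) × (Fin n → ZMod 2))
    (hm : (∑ i, (m.1 i).val * (m.2 i).val) % 2 = 0) :
    ∀ Z ∈ Siegel n,
      (thetaFirst n m Z) ^ 2 =
        ∑ a : Fin n → ZMod 2,
          (-1 : ℂ) ^ (∑ i, (a i).val * (m.2 i).val) *
            (thetaSecond n (a + m.1) Z * thetaSecond n a Z) := by
  intro Z hZ
  have hθ := summable_norm_thetaFirstTerm hZ m
  have hf := summable_norm_thetaTerm hZ
  set e := latticeAddSubPiEquiv m.1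
  have hterm (q : (Fin n → ZMod 2) × (Fin n → ℤ) × (Fin n → ℤ)) :
      thetaFirstTerm n m Z (e q).1 * thetaFirstTerm n m Z (e q).2 =
        (-1) ^ (∑ i, (q.1 i).val * (m.2 i).val) *
          (thetaTerm n (q.1 + m.1) Z q.2.1 * thetaTerm n q.1 Z q.2.2) :=
    thetaFirstTerm_mul_thetaFirstTerm_latticeAddSubPiEquiv hm Z q.1 q.2.1 q.2.2
  have hsum := (e.summable_iff.2 (summable_mul_of_summable_norm hθ hθ)).congr hterm
  have hfiber (a : Fin n → ZMod 2) : Summable fun c : (Fin n → ℤ) × (Fin n → ℤ) =>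
      (-1 : ℂ) ^ (∑ i, (a i).val * (m.2 i).val) *
        (thetaTerm n (a + m.1) Z c.1 * thetaTerm n a Z c.2) :=
    (summable_mul_of_summable_norm (hf (a + m.1)) (hf a)).mul_left _
  rw [sq, thetaFirst, tsum_mul_tsum_of_summable_norm hθ hθ,
    ← e.tsum_eq (fun p => thetaFirstTerm n m Z p.1 * thetaFirstTerm n m Z p.2),
    tsum_congr hterm, hsum.tsum_prod' hfiber, tsum_fintype]
  refine Finset.sum_congr rfl fun a _ => ?_
  dsimp only
  rw [tsum_mul_left, thetaSecond, thetaSecond, tsum_mul_tsum_of_summable_norm (hf _) (hf a)]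

end
end

section
/- For genus n = 2, the four theta constants of the second kind f₀, f₁, f₂, f₃ have no common zero on the Siegel upper half-space H₂. -/
open Complex Matrix

noncomputable section

attribute [local instance] Matrix.normedAddCommGroup Matrix.normedSpace

/-!
With `θ(Z, w) = ∑_g exp(πi Z[g] + 2πi ⟨g, w⟩)` the Riemann theta function, the identity
`Z[g] + Z[p - g] = 2 Z[g - p/2] + Z[p]/2` turns the Cauchy product of `θ(Z, ·)` with itself into
`θ(Z, w)² = ∑_p exp(πi Z[p]/2) f_{p mod 2}(Z) exp(2πi ⟨p, w⟩)`.
A common zero of the `f_a` would therefore force `θ(Z, ·) ≡ 0`, whereas the integral of `θ(Z, ·)`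
over the unit cube, its constant Fourier coefficient, is `exp(πi Z[0]) = 1`.
-/

open Real MeasureTheory

theorem Matrix.PosDef.exists_pos_mul_sum_sq_le_s3 {ι : Type*} [Fintype ι] {A : Matrix ι ι ℝ}
    (hA : A.PosDef) : ∃ δ > 0, ∀ x : ι → ℝ, δ * ∑ i, x i ^ 2 ≤ x ⬝ᵥ A *ᵥ x := by
  cases isEmpty_or_nonempty ι
  · exact ⟨1, one_pos, fun x => by simp [dotProduct]⟩
  set q : EuclideanSpace ℝ ι → ℝ := fun u => u.ofLp ⬝ᵥ A *ᵥ u.ofLp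
  obtain ⟨u₀, hu₀, hmin⟩ := (isCompact_sphere (0 : EuclideanSpace ℝ ι) 1).exists_isMinOn
    (NormedSpace.sphere_nonempty.mpr zero_le_one) (by fun_prop : Continuous q).continuousOn
  have hu₀ne : u₀.ofLp ≠ 0 := by simpa using ne_zero_of_mem_sphere one_ne_zero ⟨u₀, hu₀⟩
  refine ⟨q u₀, by simpa using hA.dotProduct_mulVec_pos hu₀ne, fun x => ?_⟩
  rcases eq_or_ne x 0 with rfl | hx
  · simp
  set r := ‖WithLp.toLp 2 x‖
  have hr : 0 < r := norm_pos_iff.mpr (by simpa using hx)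
  have hr2 : r ^ 2 = ∑ i, x i ^ 2 := by simp [r, EuclideanSpace.norm_sq_eq]
  have hmem : r⁻¹ • WithLp.toLp 2 x ∈ Metric.sphere (0 : EuclideanSpace ℝ ι) 1 := by
    simp [norm_smul, hr.ne', r]
  have hle := isMinOn_iff.mp hmin _ hmem
  simp only [q, WithLp.ofLp_smul, mulVec_smul, smul_dotProduct, dotProduct_smul,
    smul_eq_mul] at hle
  rw [← hr2]
  calc q u₀ * r ^ 2 ≤ r⁻¹ * (r⁻¹ * (x ⬝ᵥ A *ᵥ x)) * r ^ 2 := by gcongr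
    _ = x ⬝ᵥ A *ᵥ x := by field_simp

theorem summable_prod_apply_of_nonneg {ι α : Type*} [Fintype ι] {f : α → ℝ}
    (hf₀ : 0 ≤ f) (hf : Summable f) : Summable fun x : ι → α => ∏ i, f (x i) := by
  classical
  refine summable_of_sum_le (c := ∏ _i : ι, ∑' a, f a)
    (fun x => Finset.prod_nonneg fun i _ => hf₀ _) fun s => ?_
  calc ∑ x ∈ s, ∏ i, f (x i)
      ≤ ∑ x ∈ Fintype.piFinset fun i => s.image (· i), ∏ i, f (x i) :=
        Finset.sum_le_sum_of_subset_of_nonneg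
          (fun x hx => Fintype.mem_piFinset.mpr fun i => Finset.mem_image_of_mem _ hx)
          fun x _ _ => Finset.prod_nonneg fun i _ => hf₀ _
    _ = ∏ i, ∑ a ∈ s.image (· i), f a := (Finset.prod_univ_sum _ _).symm
    _ ≤ ∏ _i : ι, ∑' a, f a :=
        Finset.prod_le_prod (fun i _ => Finset.sum_nonneg fun a _ => hf₀ a)
          fun i _ => hf.sum_le_tsum _ fun a _ => hf₀ a

theorem summable_exp_neg_mul_int_sq {c : ℝ} (hc : 0 < c) :
    Summable fun k : ℤ => rexp (-c * k ^ 2) := by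
  have hτ : (c / π * I).im = c / π := by simp
  have hsum := (summable_jacobiTheta₂_term_iff 0 (c / π * I)).mpr (by rw [hτ]; positivity)
  refine hsum.norm.congr fun k => ?_
  rw [norm_jacobiTheta₂_term, hτ, zero_im, mul_zero, sub_zero]
  field_simp

theorem tsum_mul_tsum_eq_tsum_tsum_mul_sub {G R : Type*} [AddCommGroup G] [NormedRing R]
    [CompleteSpace R] {f g : G → R} (hf : Summable fun x => ‖f x‖)
    (hg : Summable fun x => ‖g x‖) :
    (∑' x, f x) * (∑' y, g y) = ∑' p, ∑' x, f x * g (p - x) := by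
  let e : G × G ≃ G × G :=
    { toFun := fun z => (z.2, z.1 - z.2)
      invFun := fun z => (z.1 + z.2, z.1)
      left_inv := fun z => by simp
      right_inv := fun z => by simp }
  have hsum : Summable fun z : G × G => f (e z).1 * g (e z).2 :=
    e.summable_iff.mpr (summable_mul_of_summable_norm hf hg)
  rw [tsum_mul_tsum_of_summable_norm hf hg, ← e.tsum_eq, hsum.tsum_prod]
  rfl

theorem dotProduct_mulVec_add_dotProduct_mulVec_sub {ι R : Type*} [Fintype ι] [Field R]
    [NeZero (2 : R)] (Z : Matrix ι ι R) (x p : ι → R) :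
    x ⬝ᵥ Z *ᵥ x + (p - x) ⬝ᵥ Z *ᵥ (p - x) =
      2 * ((x - (2⁻¹ : R) • p) ⬝ᵥ Z *ᵥ (x - (2⁻¹ : R) • p)) + 2⁻¹ * (p ⬝ᵥ Z *ᵥ p) := by
  simp only [mulVec_sub, mulVec_smul, sub_dotProduct, dotProduct_sub, smul_dotProduct,
    dotProduct_smul, smul_eq_mul]
  field_simp
  ring

variable {n : ℕ}

def gaussTerm (Z : Matrix (Fin n) (Fin n) ℂ) (g : Fin n → ℤ) : ℂ :=
  cexp (π * I * ((fun i => (g i : ℂ)) ⬝ᵥ Z *ᵥ fun i => (g i : ℂ)))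

def fourierMonomial (g : Fin n → ℤ) (w : Fin n → ℝ) : ℂ :=
  cexp (2 * π * I * (∑ i, (g i : ℝ) * w i : ℝ))

def riemannTheta (Z : Matrix (Fin n) (Fin n) ℂ) (w : Fin n → ℝ) : ℂ :=
  ∑' g : Fin n → ℤ, gaussTerm Z g * fourierMonomial g w

/-- `p - p / 2 = ⌈p / 2⌉` is the shift that recentres `g + (p mod 2) / 2` at `g - p / 2`. -/
theorem thetaVec_sub_sub_ediv_two (p g : Fin n → ℤ) :
    thetaVec n (fun i => (p i : ZMod 2)) (g - (p - p / 2)) =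
      (fun i => (g i : ℂ)) - (2⁻¹ : ℂ) • fun i => (p i : ℂ) := by
  funext i
  have hval : (((p i : ZMod 2).val : ℕ) : ℂ) = p i - 2 * ((p i / 2 : ℤ) : ℂ) := by
    have hmod : ((p i : ZMod 2).val : ℤ) = p i % 2 := ZMod.val_intCast _
    exact_mod_cast (show ((p i : ZMod 2).val : ℤ) = p i - 2 * (p i / 2) by lia)
  simp only [thetaVec, Pi.sub_apply, Pi.smul_apply, Pi.div_apply, Pi.ofNat_apply, smul_eq_mul,
    Int.cast_sub, hval]
  ring

theorem gaussTerm_mul_gaussTerm_sub (Z : Matrix (Fin n) (Fin n) ℂ) (p g : Fin n → ℤ) :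
    gaussTerm Z g * gaussTerm Z (p - g) =
      cexp (π * I / 2 * ((fun i => (p i : ℂ)) ⬝ᵥ Z *ᵥ fun i => (p i : ℂ))) *
        thetaTerm n (fun i => (p i : ZMod 2)) Z (g - (p - p / 2)) := by
  have hcast : (fun i => ((p - g) i : ℂ)) = (fun i => (p i : ℂ)) - fun i => (g i : ℂ) := by
    funext i; simp
  rw [gaussTerm, gaussTerm, thetaTerm, thetaVec_sub_sub_ediv_two, ← Complex.exp_add,
    ← Complex.exp_add, ← mul_add, hcast, dotProduct_mulVec_add_dotProduct_mulVec_sub]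
  ring_nf

theorem tsum_gaussTerm_mul_gaussTerm_sub (Z : Matrix (Fin n) (Fin n) ℂ) (p : Fin n → ℤ) :
    ∑' g, gaussTerm Z g * gaussTerm Z (p - g) =
      cexp (π * I / 2 * ((fun i => (p i : ℂ)) ⬝ᵥ Z *ᵥ fun i => (p i : ℂ))) *
        thetaSecond n (fun i => (p i : ZMod 2)) Z := by
  simp_rw [gaussTerm_mul_gaussTerm_sub, tsum_mul_left]
  exact congrArg _ ((Equiv.subRight (p - p / 2)).tsum_eq _)

theorem norm_gaussTerm (Z : Matrix (Fin n) (Fin n) ℂ) (g : Fin n → ℤ) :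
    ‖gaussTerm Z g‖ = rexp (-π * ((fun i => (g i : ℝ)) ⬝ᵥ
      (of fun i j => (Z i j).im) *ᵥ fun i => (g i : ℝ))) := by
  rw [gaussTerm, Complex.norm_exp]
  simp [dotProduct, mulVec, Finset.mul_sum]

theorem summable_norm_gaussTerm {Z : Matrix (Fin n) (Fin n) ℂ}
    (hZ : (of fun i j => (Z i j).im).PosDef) : Summable fun g => ‖gaussTerm Z g‖ := by
  obtain ⟨δ, hδ, hle⟩ := hZ.exists_pos_mul_sum_sq_le_s3
  refine (summable_prod_apply_of_nonneg (ι := Fin n) (fun _ => (exp_pos _).le)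
    (summable_exp_neg_mul_int_sq (mul_pos pi_pos hδ))).of_nonneg_of_le
    (fun _ => norm_nonneg _) fun g => ?_
  rw [norm_gaussTerm, ← Real.exp_sum]
  gcongr
  have := hle fun i => (g i : ℝ)
  rw [← Finset.mul_sum]
  nlinarith [pi_pos]

theorem norm_fourierMonomial (g : Fin n → ℤ) (w : Fin n → ℝ) : ‖fourierMonomial g w‖ = 1 := by
  simp [fourierMonomial, Complex.norm_exp]

theorem fourierMonomial_mul_fourierMonomial_sub (p g : Fin n → ℤ) (w : Fin n → ℝ) :
    fourierMonomial g w * fourierMonomial (p - g) w = fourierMonomial p w := by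
  rw [fourierMonomial, fourierMonomial, fourierMonomial, ← Complex.exp_add, ← mul_add,
    ← Complex.ofReal_add, ← Finset.sum_add_distrib]
  simp [sub_mul]

theorem riemannTheta_sq {Z : Matrix (Fin n) (Fin n) ℂ}
    (hZ : (of fun i j => (Z i j).im).PosDef) (w : Fin n → ℝ) :
    riemannTheta Z w ^ 2 = ∑' p : Fin n → ℤ,
      cexp (π * I / 2 * ((fun i => (p i : ℂ)) ⬝ᵥ Z *ᵥ fun i => (p i : ℂ))) *
        thetaSecond n (fun i => (p i : ZMod 2)) Z * fourierMonomial p w := by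
  have hsum : Summable fun g => ‖gaussTerm Z g * fourierMonomial g w‖ := by
    simpa only [norm_mul, norm_fourierMonomial, mul_one] using summable_norm_gaussTerm hZ
  rw [riemannTheta, sq, tsum_mul_tsum_eq_tsum_tsum_mul_sub hsum hsum]
  congr 1 with p
  rw [← tsum_gaussTerm_mul_gaussTerm_sub, ← tsum_mul_right]
  congr 1 with g
  rw [← fourierMonomial_mul_fourierMonomial_sub p g w]
  ring

theorem setIntegral_Ioc_cexp_two_pi_I_int_mul (k : ℤ) :
    ∫ t in Set.Ioc (0 : ℝ) 1, cexp (2 * π * I * (k * t : ℝ)) = if k = 0 then 1 else 0 := by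
  rw [← intervalIntegral.integral_of_le zero_le_one]
  split_ifs with hk
  · simp [hk]
  have hc : 2 * π * I * k ≠ 0 := by simp [hk, pi_ne_zero]
  simp_rw [ofReal_mul, ofReal_intCast, ← mul_assoc]
  rw [integral_exp_mul_complex hc, ofReal_one, ofReal_zero, mul_one, mul_zero, Complex.exp_zero,
    show 2 * π * I * k = k * (2 * π * I) by ring, Complex.exp_int_mul_two_pi_mul_I, sub_self,
    zero_div]

theorem setIntegral_unitCube_fourierMonomial (g : Fin n → ℤ) :
    ∫ w in Set.univ.pi fun _ => Set.Ioc (0 : ℝ) 1, fourierMonomial g w =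
      if g = 0 then 1 else 0 := by
  rw [volume_pi, Measure.restrict_pi_pi]
  simp_rw [fourierMonomial, ofReal_sum, Finset.mul_sum, Complex.exp_sum]
  rw [integral_fintype_prod_eq_prod (fun i t => cexp (2 * π * I * (g i * t : ℝ)))]
  simp_rw [setIntegral_Ioc_cexp_two_pi_I_int_mul, Finset.prod_boole, funext_iff]
  simp

theorem setIntegral_riemannTheta {Z : Matrix (Fin n) (Fin n) ℂ}
    (hZ : (of fun i j => (Z i j).im).PosDef) :
    ∫ w in Set.univ.pi fun _ => Set.Ioc (0 : ℝ) 1, riemannTheta Z w = 1 := by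
  set B : Set (Fin n → ℝ) := Set.univ.pi fun _ => Set.Ioc 0 1
  have hB : volume B = 1 := by simp [B, volume_pi_pi]
  have hint (g : Fin n → ℤ) : IntegrableOn (fun w => gaussTerm Z g * fourierMonomial g w) B :=
    .of_bound (by simp [hB])
      (Continuous.aestronglyMeasurable (by unfold fourierMonomial; fun_prop))
      ‖gaussTerm Z g‖ <| .of_forall fun w => by rw [norm_mul, norm_fourierMonomial, mul_one]
  have hnorm : Summable fun g : Fin n → ℤ =>
      ∫ w in B, ‖gaussTerm Z g * fourierMonomial g w‖ := by
    simpa [norm_mul, norm_fourierMonomial, measureReal_def, hB]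
      using summable_norm_gaussTerm hZ
  simp only [riemannTheta]
  rw [← integral_tsum_of_summable_integral_norm hint hnorm]
  simp_rw [integral_const_mul, B, setIntegral_unitCube_fourierMonomial, mul_ite, mul_one,
    mul_zero]
  rw [tsum_ite_eq]
  simp [gaussTerm]

theorem exists_thetaSecond_ne_zero {Z : Matrix (Fin n) (Fin n) ℂ}
    (hZ : (of fun i j => (Z i j).im).PosDef) : ∃ a, thetaSecond n a Z ≠ 0 := by
  by_contra! hzero
  have hθ (w : Fin n → ℝ) : riemannTheta Z w = 0 := by
    simpa [hzero] using riemannTheta_sq hZ w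
  simpa [hθ] using setIntegral_riemannTheta hZ

/-- The four theta constants of the second kind have no common zero on `H₂`. -/
theorem thetaSecond_no_common_zero :
    ∀ Z ∈ Siegel 2, ∃ a : Fin 2 → ZMod 2, thetaSecond 2 a Z ≠ 0 :=
  fun _ hZ => exists_thetaSecond_ne_zero hZ.2
end
end

section
/- Igusa's group Γ_n[q,2q] := {M ∈ Γ_n[q] : diag(ABᵀ) ≡ diag(CDᵀ) ≡ 0 mod 2q} is a normal subgroup of Sp(2n,ℤ) whenever q is even. -/
/-!
Write `M = 1 + X` with `X ≡ 0 mod q`. As `q` is even, `q² ≡ 0 mod 2q`, so the conditions on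
`diag (A Bᵀ)` and `diag (C Dᵀ)` say that `diag (X J) ≡ 0 mod 2q`; this is additive under products,
since `(1 + X) (1 + Y) = 1 + X + Y + X Y`, and changes sign under `M ↦ M⁻¹ = -J Mᵀ J`. For
conjugation by `S ∈ Sp(2n, ℤ)` we have `(S M S⁻¹ - 1) J = S (X J) Sᵀ`, and the symplectic relation
for `M` makes `X J` alternating modulo `2q`, a property preserved by the congruence `Y ↦ S Y Sᵀ`.
-/

open Matrix

noncomputable section

/-- Membership conditions for Igusa's group `Γ_n[q,2q]`:
`M ≡ 1 mod q` together with `diag(ABᵀ) ≡ diag(CDᵀ) ≡ 0 mod 2q`. -/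
def IgusaCond (n q : ℕ) (M : Matrix (Fin n ⊕ Fin n) (Fin n ⊕ Fin n) ℤ) : Prop :=
  (∀ i j, (q : ℤ) ∣ (M i j - (1 : Matrix (Fin n ⊕ Fin n) (Fin n ⊕ Fin n) ℤ) i j)) ∧
  (∀ i, (2 * (q : ℤ)) ∣ ((M.toBlocks₁₁ * (M.toBlocks₁₂)ᵀ) i i)) ∧
  (∀ i, (2 * (q : ℤ)) ∣ ((M.toBlocks₂₁ * (M.toBlocks₂₂)ᵀ) i i))

theorem Even.two_mul_dvd_mul_self {R : Type*} [CommSemiring R] {q : R} (hq : Even q) :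
    2 * q ∣ q * q := by
  obtain ⟨r, rfl⟩ := hq
  exact ⟨r, by ring⟩

namespace Matrix

variable {l m o R : Type*} [CommRing R]

section Alternating

variable [Fintype l]

theorem dotProduct_mulVec_self_eq_zero {Y : Matrix l l R} (hdiag : ∀ i, Y i i = 0)
    (hskew : ∀ i j, Y i j + Y j i = 0) (v : l → R) : v ⬝ᵥ Y *ᵥ v = 0 := by
  simp only [dotProduct, mulVec, Finset.mul_sum, ← Finset.sum_product']
  refine Finset.sum_ninvolution Prod.swap (fun p => ?_) (fun p hp hswap => ?_)
    (fun _ => Finset.mem_univ _) Prod.swap_swap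
  · rw [Prod.fst_swap, Prod.snd_swap]
    linear_combination v p.1 * v p.2 * hskew p.1 p.2
  · obtain ⟨i, j⟩ := p
    obtain rfl : j = i := congrArg Prod.fst hswap
    simp [hdiag] at hp

theorem dvd_dotProduct_mulVec_self {d : R} {Y : Matrix l l R} (hdiag : ∀ i, d ∣ Y i i)
    (hskew : ∀ i j, d ∣ Y i j + Y j i) (v : l → R) : d ∣ v ⬝ᵥ Y *ᵥ v := by
  let π := Ideal.Quotient.mk (Ideal.span {d})
  have h := dotProduct_mulVec_self_eq_zero (Y := Y.map π)
    (fun i => (Ideal.Quotient.eq_zero_iff_dvd d _).2 (hdiag i))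
    (fun i j => by simpa [map_add] using (Ideal.Quotient.eq_zero_iff_dvd d _).2 (hskew i j))
    (π ∘ v)
  rw [← Ideal.Quotient.eq_zero_iff_dvd, ← h]
  simp [π, dotProduct, mulVec, map_sum]

theorem dvd_diag_mul_mul_transpose {d : R} {Y : Matrix l l R} (hdiag : ∀ i, d ∣ Y i i)
    (hskew : ∀ i j, d ∣ Y i j + Y j i) (S : Matrix l l R) (k : l) : d ∣ (S * Y * Sᵀ) k k := by
  rw [mul_mul_apply, transpose_transpose]
  exact dvd_dotProduct_mulVec_self hdiag hskew (S k)

end Alternating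

section Divisibility

variable [Fintype m]

theorem dvd_mul_apply_of_dvd {d e : R} {P : Matrix l m R} {Q : Matrix m o R}
    (hP : ∀ i j, d ∣ P i j) (hQ : ∀ i j, e ∣ Q i j) (i : l) (k : o) : d * e ∣ (P * Q) i k :=
  Finset.dvd_sum fun j _ => mul_dvd_mul (hP i j) (hQ j k)

theorem dvd_mul_apply_of_dvd_left {d : R} {P : Matrix l m R} (hP : ∀ i j, d ∣ P i j)
    (Q : Matrix m o R) (i : l) (k : o) : d ∣ (P * Q) i k :=
  Finset.dvd_sum fun j _ => (hP i j).mul_right _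

theorem dvd_mul_apply_of_dvd_right {d : R} (P : Matrix l m R) {Q : Matrix m o R}
    (hQ : ∀ i j, d ∣ Q i j) (i : l) (k : o) : d ∣ (P * Q) i k :=
  Finset.dvd_sum fun j _ => (hQ j k).mul_left _

end Divisibility

section Blocks

variable [Fintype l] [DecidableEq l]

theorem mul_J_apply_inl (X : Matrix (l ⊕ l) (l ⊕ l) R) (k : l ⊕ l) (i : l) :
    (X * J l R) k (Sum.inl i) = X k (Sum.inr i) := by
  simp [mul_apply, J, one_apply]

theorem mul_J_apply_inr (X : Matrix (l ⊕ l) (l ⊕ l) R) (k : l ⊕ l) (i : l) :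
    (X * J l R) k (Sum.inr i) = -X k (Sum.inl i) := by
  simp [mul_apply, J, one_apply]

theorem toBlocks₁₁_mul_transpose_toBlocks₁₂_apply (M : Matrix (l ⊕ l) (l ⊕ l) R) (i : l) :
    (M.toBlocks₁₁ * M.toBlocks₁₂ᵀ) i i
      = ((M - 1).toBlocks₁₁ * (M - 1).toBlocks₁₂ᵀ) i i + M (.inl i) (.inr i) := by
  simp [mul_apply, toBlocks₁₁, toBlocks₁₂, one_apply, sub_mul, Finset.sum_sub_distrib]

theorem toBlocks₂₁_mul_transpose_toBlocks₂₂_apply (M : Matrix (l ⊕ l) (l ⊕ l) R) (i : l) :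
    (M.toBlocks₂₁ * M.toBlocks₂₂ᵀ) i i
      = ((M - 1).toBlocks₂₁ * (M - 1).toBlocks₂₂ᵀ) i i + M (.inr i) (.inl i) := by
  simp [mul_apply, toBlocks₂₁, toBlocks₂₂, one_apply, mul_sub, Finset.sum_sub_distrib]

end Blocks

end Matrix

section Igusa

variable {l R : Type*} [Fintype l] [DecidableEq l] [CommRing R]
variable {q : R} {A B S : Matrix (l ⊕ l) (l ⊕ l) R}

/-- `diag ((M - 1) J) = (diag B, -diag C)`: for even `q` this is `IgusaCond` (`igusaCond_iff`). -/
def IsIgusaLevel (q : R) (M : Matrix (l ⊕ l) (l ⊕ l) R) : Prop :=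
  (∀ i j, q ∣ (M - 1) i j) ∧ ∀ k, 2 * q ∣ ((M - 1) * J l R) k k

theorem isIgusaLevel_iff (M : Matrix (l ⊕ l) (l ⊕ l) R) :
    IsIgusaLevel q M ↔ (∀ i j, q ∣ (M - 1) i j) ∧ (∀ i, 2 * q ∣ M (.inl i) (.inr i)) ∧
      ∀ i, 2 * q ∣ M (.inr i) (.inl i) := by
  simp [IsIgusaLevel, Sum.forall, mul_J_apply_inl, mul_J_apply_inr, one_apply]

theorem isIgusaLevel_one (q : R) : IsIgusaLevel q (1 : Matrix (l ⊕ l) (l ⊕ l) R) := by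
  simp [IsIgusaLevel]

namespace IsIgusaLevel

theorem mul (hq : Even q) (hA : IsIgusaLevel q A) (hB : IsIgusaLevel q B) :
    IsIgusaLevel q (A * B) := by
  have hAB : A * B - 1 = (A - 1) * (B - 1) + (A - 1) + (B - 1) := by noncomm_ring
  have hprod : ∀ i j, q * q ∣ ((A - 1) * (B - 1)) i j := dvd_mul_apply_of_dvd hA.1 hB.1
  refine ⟨fun i j => ?_, fun k => ?_⟩
  · rw [hAB, Matrix.add_apply, Matrix.add_apply]
    exact (((dvd_mul_right q q).trans (hprod i j)).add (hA.1 i j)).add (hB.1 i j)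
  · rw [hAB, Matrix.add_mul, Matrix.add_mul, Matrix.add_apply, Matrix.add_apply]
    exact ((hq.two_mul_dvd_mul_self.trans (dvd_mul_apply_of_dvd_left hprod _ k k)).add
      (hA.2 k)).add (hB.2 k)

/-- In `Sp(2n)` the inverse of `A` is `-J Aᵀ J`. -/
theorem neg_J_mul_transpose_mul_J (hA : IsIgusaLevel q A) :
    IsIgusaLevel q (-J l R * Aᵀ * J l R) := by
  set X := A - 1
  have hX : -J l R * Aᵀ * J l R - 1 = -J l R * Xᵀ * J l R := by
    have : -J l R * (Aᵀ - 1) * J l R = -J l R * Aᵀ * J l R + J l R * J l R := by noncomm_ring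
    rw [transpose_sub, transpose_one, this, J_squared]
    abel
  have hXJ : -J l R * Xᵀ * J l R * J l R = -(X * J l R)ᵀ := by
    rw [Matrix.mul_assoc _ (J l R), J_squared, transpose_mul, J_transpose]
    noncomm_ring
  refine ⟨fun i j => ?_, fun k => ?_⟩
  · rw [hX]
    exact dvd_mul_apply_of_dvd_left (dvd_mul_apply_of_dvd_right _ fun i j => hA.1 j i) _ i j
  · rw [hX, hXJ, neg_apply, transpose_apply, dvd_neg]
    exact hA.2 k

theorem add_transpose_mul_J (hq : Even q) (hA : A ∈ symplecticGroup l R)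
    (h : IsIgusaLevel q A) (i j : l ⊕ l) :
    2 * q ∣ ((A - 1) * J l R) i j + ((A - 1) * J l R) j i := by
  set X := A - 1 with hXA
  have hJX : ∀ i j, q ∣ (J l R * Xᵀ) i j := dvd_mul_apply_of_dvd_right _ fun i j => h.1 j i
  have key : X * J l R + (X * J l R)ᵀ
      = A * J l R * Aᵀ - J l R - X * (J l R * Xᵀ) - (J l R * Xᵀ + J l R * Xᵀ) := by
    rw [hXA, transpose_mul, J_transpose, transpose_sub, transpose_one]
    noncomm_ring
  rw [SymplecticGroup.mem_iff.1 hA, sub_self, zero_sub] at key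
  have := congrFun (congrFun key i) j
  rw [Matrix.add_apply, transpose_apply] at this
  rw [this, Matrix.sub_apply, Matrix.neg_apply, Matrix.add_apply, ← two_mul]
  exact (dvd_neg.2 (hq.two_mul_dvd_mul_self.trans (dvd_mul_apply_of_dvd h.1 hJX i j))).sub
    (mul_dvd_mul_left 2 (hJX i j))

theorem conj (hq : Even q) (hA : A ∈ symplecticGroup l R) (hS : S ∈ symplecticGroup l R)
    (h : IsIgusaLevel q A) : IsIgusaLevel q (S * A * (-J l R * Sᵀ * J l R)) := by
  set X := A - 1
  have hX : S * A * (-J l R * Sᵀ * J l R) - 1 = S * X * (-J l R * Sᵀ * J l R) := by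
    have hSinv : S * (-J l R * Sᵀ * J l R) = 1 := calc
      _ = -(S * J l R * Sᵀ * J l R) := by noncomm_ring
      _ = 1 := by rw [SymplecticGroup.mem_iff.1 hS, J_squared, neg_neg]
    rw [Matrix.mul_sub, Matrix.sub_mul, Matrix.mul_one, hSinv]
  have hXJ : S * X * (-J l R * Sᵀ * J l R) * J l R = S * (X * J l R) * Sᵀ := by
    simp only [Matrix.mul_assoc, J_squared]
    noncomm_ring
  refine ⟨fun i j => ?_, fun k => ?_⟩
  · rw [hX]
    exact dvd_mul_apply_of_dvd_left (dvd_mul_apply_of_dvd_right _ h.1) _ i j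
  · rw [hX, hXJ]
    exact dvd_diag_mul_mul_transpose h.2 (h.add_transpose_mul_J hq hA) S k

end IsIgusaLevel

variable (l) in
def igusaSubgroup (q : R) (hq : Even q) : Subgroup (symplecticGroup l R) where
  carrier := {M | IsIgusaLevel q (M : Matrix (l ⊕ l) (l ⊕ l) R)}
  one_mem' := isIgusaLevel_one q
  mul_mem' ha hb := ha.mul hq hb
  inv_mem' hA := hA.neg_J_mul_transpose_mul_J

theorem mem_igusaSubgroup (hq : Even q) (M : symplecticGroup l R) :
    M ∈ igusaSubgroup l q hq ↔ IsIgusaLevel q (M : Matrix (l ⊕ l) (l ⊕ l) R) :=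
  Iff.rfl

theorem igusaSubgroup_normal (hq : Even q) : (igusaSubgroup l q hq).Normal where
  conj_mem A hA S := hA.conj hq A.2 S.2

end Igusa

theorem igusaCond_iff {n q : ℕ} (hq : Even q) (M : Matrix (Fin n ⊕ Fin n) (Fin n ⊕ Fin n) ℤ) :
    IgusaCond n q M ↔ IsIgusaLevel (q : ℤ) M := by
  rw [isIgusaLevel_iff, IgusaCond]
  refine and_congr_right fun hX => ?_
  have hsq := ((Int.even_coe_nat q).2 hq).two_mul_dvd_mul_self
  refine and_congr (forall_congr' fun i => ?_) (forall_congr' fun i => ?_)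
  · rw [toBlocks₁₁_mul_transpose_toBlocks₁₂_apply, dvd_add_right (hsq.trans
      (dvd_mul_apply_of_dvd (P := (M - 1).toBlocks₁₁) (Q := (M - 1).toBlocks₁₂ᵀ)
        (fun _ _ => hX _ _) (fun _ _ => hX _ _) i i))]
  · rw [toBlocks₂₁_mul_transpose_toBlocks₂₂_apply, dvd_add_right (hsq.trans
      (dvd_mul_apply_of_dvd (P := (M - 1).toBlocks₂₁) (Q := (M - 1).toBlocks₂₂ᵀ)
        (fun _ _ => hX _ _) (fun _ _ => hX _ _) i i))]

/-- For even `q`, Igusa's group `Γ_n[q,2q]` is a normal subgroup of `Sp(2n,ℤ)`. -/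
theorem igusa_group_normal (n q : ℕ) (hq : Even q) :
    ∃ H : Subgroup (Matrix.symplecticGroup (Fin n) ℤ),
      (∀ M : Matrix.symplecticGroup (Fin n) ℤ,
        M ∈ H ↔ IgusaCond n q (M : Matrix (Fin n ⊕ Fin n) (Fin n ⊕ Fin n) ℤ)) ∧
      H.Normal :=
  ⟨igusaSubgroup _ _ ((Int.even_coe_nat q).2 hq), fun M =>
    (mem_igusaSubgroup _ M).trans (igusaCond_iff hq M.1).symm,
    igusaSubgroup_normal _⟩
end
end

section
/- Let R = ℂ[x₀,x₁,x₂,x₃] and M⁺ ⊆ R⁴ the syzygy module of (x₀,x₁,x₂,x₃). Then the intersection ⋂_{i=0}^{3} (x₀x₁x₂x₃/x_i)·M⁺ equals x₀x₁x₂x₃·M⁺, where (x₀x₁x₂x₃/x_i)·M⁺ denotes the submodule of R⁴ obtained by multiplying M⁺ by the degree-3 monomial omitting x_i. -/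
/-!
Write `m_i = x₀x₁x₂x₃/x_i`. Any `v` in the intersection is `m₀ • u` with `u ∈ M⁺`; since `v` also lies
in `m₁ • M⁺` and `x₀ ∣ m₁`, every entry of `v` is divisible by `x₀`. As `x₀` is prime and does not
divide `m₀`, this gives `u = x₀ • w`, and `w ∈ M⁺` because `R` is a domain. Hence
`v = x₀x₁x₂x₃ • w`. The reverse inclusion holds since `x₀x₁x₂x₃ = x_i m_i`.
-/

open MvPolynomial

noncomputable section

/-- The polynomial ring `R = ℂ[x₀,x₁,x₂,x₃]`. -/
abbrev Rpoly : Type := MvPolynomial (Fin 4) ℂ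

/-- The syzygy module `M⁺` of `(x₀,x₁,x₂,x₃)` inside `R⁴`. -/
def Msyz : Submodule Rpoly (Fin 4 → Rpoly) :=
  LinearMap.ker (Fintype.linearCombination Rpoly (fun a => (X a : Rpoly)))

/-- The degree-3 monomial `x₀x₁x₂x₃/x_i` omitting the variable `x_i`. -/
def mOmit (i : Fin 4) : Rpoly := ∏ a ∈ Finset.univ.erase i, X a

/-- Multiplication of a submodule of `R⁴` by a polynomial, componentwise. -/
def polySmul (p : Rpoly) (N : Submodule Rpoly (Fin 4 → Rpoly)) :
    Submodule Rpoly (Fin 4 → Rpoly) :=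
  Submodule.map (p • (LinearMap.id : (Fin 4 → Rpoly) →ₗ[Rpoly] (Fin 4 → Rpoly))) N

section polySmul

variable {p q : Rpoly} {N : Submodule Rpoly (Fin 4 → Rpoly)} {v : Fin 4 → Rpoly}

lemma mem_polySmul : v ∈ polySmul p N ↔ ∃ u ∈ N, p • u = v := by
  simp [polySmul, Submodule.mem_map]

lemma polySmul_mul_le (p q : Rpoly) (N : Submodule Rpoly (Fin 4 → Rpoly)) :
    polySmul (p * q) N ≤ polySmul q N := by
  intro v hv
  obtain ⟨u, hu, rfl⟩ := mem_polySmul.mp hv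
  exact mem_polySmul.mpr ⟨p • u, N.smul_mem p hu, by rw [smul_comm, mul_smul]⟩

lemma dvd_apply_of_mem_polySmul (hv : v ∈ polySmul p N) (hqp : q ∣ p) (k : Fin 4) : q ∣ v k := by
  obtain ⟨u, -, rfl⟩ := mem_polySmul.mp hv
  exact hqp.mul_right (u k)

end polySmul

lemma smul_mem_Msyz_iff {a : Rpoly} (ha : a ≠ 0) {w : Fin 4 → Rpoly} :
    a • w ∈ Msyz ↔ w ∈ Msyz := by
  simp only [Msyz, LinearMap.mem_ker, map_smul, smul_eq_zero, ha, false_or]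

lemma X_mul_mOmit (i : Fin 4) : (X i : Rpoly) * mOmit i = X 0 * X 1 * X 2 * X 3 := by
  rw [mOmit, Finset.mul_prod_erase Finset.univ _ (Finset.mem_univ i), Fin.prod_univ_four]

lemma X_dvd_mOmit_iff {i j : Fin 4} : (X i : Rpoly) ∣ mOmit j ↔ i ≠ j := by
  simp [mOmit, X_prime.dvd_finsetProd_iff, X_dvd_X, eq_comm]

lemma X_dvd_of_dvd_mOmit_mul {i : Fin 4} {a : Rpoly} (h : X i ∣ mOmit i * a) : X i ∣ a :=
  (X_prime.dvd_or_dvd h).resolve_left (X_dvd_mOmit_iff.not_left.mpr rfl)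

/-- `⋂_{i=0}^{3} (x₀x₁x₂x₃/x_i)·M⁺ = x₀x₁x₂x₃·M⁺`. -/
theorem syzygy_intersection :
    (⨅ i : Fin 4, polySmul (mOmit i) Msyz) =
      polySmul (X 0 * X 1 * X 2 * X 3 : Rpoly) Msyz := by
  refine le_antisymm (fun v hv => ?_) (le_iInf fun i => ?_)
  · rw [Submodule.mem_iInf] at hv
    obtain ⟨u, hu, rfl⟩ := mem_polySmul.mp (hv 0)
    have hX0 : ∀ k, (X 0 : Rpoly) ∣ u k := fun k =>
      X_dvd_of_dvd_mOmit_mul (dvd_apply_of_mem_polySmul (hv 1) (X_dvd_mOmit_iff.mpr (by decide)) k)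
    choose w hw using hX0
    have hu_eq : u = (X 0 : Rpoly) • w := funext hw
    rw [hu_eq, smul_mem_Msyz_iff (X_ne_zero 0)] at hu
    refine mem_polySmul.mpr ⟨w, hu, ?_⟩
    rw [hu_eq, smul_smul, mul_comm (mOmit 0), X_mul_mOmit]
  · rw [← X_mul_mOmit i]
    exact polySmul_mul_le _ _ _
end
end

section
/- Let p: 𝔼ⁿ → 𝔼ⁿ, (z¹,...,zⁿ) ↦ (z¹,...,z^{n−1},(zⁿ)²) be the 2-fold standard covering of the unit polydisc ramified over {zⁿ = 0}, and let ω = Σ_j ω_j dz^j ⊗ (dz¹∧⋯∧dzⁿ)^{⊗k} be a tensor with ω_j holomorphic on {zⁿ ≠ 0} and meromorphic along {zⁿ = 0}. Then p*ω extends holomorphically to 𝔼ⁿ if and only if ord(ω_n, {zⁿ=0}) ≥ −⌊(k+1)/2⌋ and ord(ω_j, {zⁿ=0}) ≥ −⌊k/2⌋ for all j ≠ n. [The pullback coefficients are (p*ω)_n = (2zⁿ)^{k+1} ω_n∘p and (p*ω)_j = (2zⁿ)^k ω_j∘p for j ≠ n.] -/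
noncomputable section

/-- The open unit polydisc `𝔼^{n+1}` in `ℂ^{n+1}`. -/
def Polydisc (n : ℕ) : Set (Fin (n + 1) → ℂ) :=
  {z | ∀ i, ‖z i‖ < 1}

/-- The 2-fold standard covering `p(z¹,…,zⁿ) = (z¹,…,z^{n−1},(zⁿ)²)`, ramified over
`{zⁿ = 0}` (the last coordinate is squared). -/
def pcov (n : ℕ) (z : Fin (n + 1) → ℂ) : Fin (n + 1) → ℂ :=
  Function.update z (Fin.last n) ((z (Fin.last n)) ^ 2)

/-- `f`, defined off `{zⁿ = 0}`, extends holomorphically to the whole polydisc. -/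
def ExtendsHol (n : ℕ) (f : (Fin (n + 1) → ℂ) → ℂ) : Prop :=
  ∃ F : (Fin (n + 1) → ℂ) → ℂ, DifferentiableOn ℂ F (Polydisc n) ∧
    ∀ z ∈ Polydisc n, z (Fin.last n) ≠ 0 → F z = f z

/-!
`(2zₙ)^m · f(p z)` is even or odd in `zₙ` according to the parity `ε` of `m`, so everything
reduces to a descent statement: a function `G` holomorphic on the polydisc with
`G(z', -t) = (-1)^ε G(z', t)` (`ε ≤ 1`) is `G(z) = H(p z) · zₙ^ε` for a holomorphic `H`.
The function `H(w', w) = (2πi)⁻¹ ∮_{|ζ| = ρ} ζ^{1-ε} G(w', ζ) / (ζ² - w) dζ` does it: it is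
holomorphic by differentiation under the integral sign (Cauchy estimates bound the derivative of
the integrand), it does not depend on `ρ ∈ (√|w|, 1)`, and for `w = s² ≠ 0` the residues at
`ζ = ±s` give `(G(w', s) + (-1)^ε G(w', -s)) / (2 s^ε) = G(w', s) / s^ε`.
-/

open Metric Set Filter Topology Complex Real MeasureTheory Interval

theorem norm_fderiv_le_of_forall_mem_closedBall_norm_le {E F : Type*} [NormedAddCommGroup E]
    [NormedSpace ℂ E] [NormedAddCommGroup F] [NormedSpace ℂ F] {f : E → F} {x : E} {r M : ℝ}
    (hr : 0 < r) (hd : DifferentiableOn ℂ f (closedBall x r))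
    (hM : ∀ y ∈ closedBall x r, ‖f y‖ ≤ M) :
    ‖fderiv ℂ f x‖ ≤ M / r := by
  have hM0 : 0 ≤ M := (norm_nonneg _).trans (hM x (mem_closedBall_self hr.le))
  refine ContinuousLinearMap.opNorm_le_bound _ (by positivity) fun v => ?_
  rcases eq_or_ne v 0 with rfl | hv
  · simp
  have hv' : 0 < ‖v‖ := norm_pos_iff.2 hv
  have hline : ∀ s : ℂ, HasDerivAt (fun s : ℂ => x + s • v) v s := fun s => by
    simpa using ((hasDerivAt_id s).smul_const v).const_add x
  have hmaps : MapsTo (fun s : ℂ => x + s • v) (closedBall 0 (r / ‖v‖)) (closedBall x r) := by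
    intro s hs
    rw [mem_closedBall_zero_iff, le_div_iff₀ hv'] at hs
    simpa [dist_eq_norm, norm_smul] using hs
  have hg : DiffContOnCl ℂ (fun s : ℂ => f (x + s • v)) (ball 0 (r / ‖v‖)) :=
    (hd.comp (fun s _ => (hline s).differentiableAt.differentiableWithinAt) hmaps).diffContOnCl_ball
      subset_rfl
  have hderiv : HasDerivAt (fun s : ℂ => f (x + s • v)) (fderiv ℂ f x v) 0 := by
    have hfx : HasFDerivAt f (fderiv ℂ f x) (x + (0 : ℂ) • v) := by
      simpa using (hd.differentiableAt (closedBall_mem_nhds x hr)).hasFDerivAt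
    exact hfx.comp_hasDerivAt 0 (hline 0)
  calc ‖fderiv ℂ f x v‖ ≤ M / (r / ‖v‖) := by
        rw [← hderiv.deriv]
        exact norm_deriv_le_of_forall_mem_sphere_norm_le (by positivity) hg
          fun s hs => hM _ (hmaps (sphere_subset_closedBall hs))
    _ = M / r * ‖v‖ := by field_simp

theorem exists_closedBall_prod_subset_of_isOpen {X Y : Type*} [PseudoMetricSpace X]
    [TopologicalSpace Y] {V : Set (X × Y)} (hV : IsOpen V) {t : Set Y} (ht : IsCompact t) {x : X}
    (hx : ∀ y ∈ t, (x, y) ∈ V) : ∃ δ > 0, closedBall x δ ×ˢ t ⊆ V := by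
  obtain ⟨U, W, hU, -, hxU, htW, hUW⟩ := generalized_tube_lemma isCompact_singleton ht hV
    (by rintro ⟨_, y⟩ ⟨rfl, hy⟩; exact hx y hy)
  obtain ⟨r, hr, hrU⟩ := Metric.isOpen_iff.1 hU x (hxU rfl)
  exact ⟨r / 2, by positivity,
    (Set.prod_mono ((closedBall_subset_ball (by linarith)).trans hrU) htW).trans hUW⟩

theorem measurable_fderiv_prodMk_left {E : Type*} [NormedAddCommGroup E] [NormedSpace ℂ E]
    [MeasurableSpace E] [OpensMeasurableSpace E] [SecondCountableTopology E]
    {α : Type*} [MeasurableSpace α] {Ψ : E × ℂ → ℂ} {γ : α → ℂ} (hγ : Measurable γ) {x : E}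
    (hΨ : ∀ a, DifferentiableAt ℂ Ψ (x, γ a)) :
    Measurable fun a => fderiv ℂ (fun y => Ψ (y, γ a)) x := by
  have hpartial (a : α) : fderiv ℂ (fun y => Ψ (y, γ a)) x =
      (fderiv ℂ Ψ (x, γ a)).comp (ContinuousLinearMap.inl ℂ E ℂ) :=
    ((hΨ a).hasFDerivAt.comp x (hasFDerivAt_prodMk_left x _)).fderiv
  simp only [hpartial]
  exact ((ContinuousLinearMap.compL ℂ E (E × ℂ) ℂ).flip
    (ContinuousLinearMap.inl ℂ E ℂ)).continuous.measurable.comp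
      ((measurable_fderiv ℂ Ψ).comp (measurable_const.prodMk hγ))

theorem differentiableAt_circleIntegral_of_differentiableOn {E : Type*} [NormedAddCommGroup E]
    [NormedSpace ℂ E] [FiniteDimensional ℂ E] [MeasurableSpace E] [OpensMeasurableSpace E]
    {Ψ : E × ℂ → ℂ} {V : Set (E × ℂ)} (hV : IsOpen V) (hΨ : DifferentiableOn ℂ Ψ V)
    {c : ℂ} {R : ℝ} (hR : 0 ≤ R) {x : E} (hx : ∀ ζ ∈ sphere c R, (x, ζ) ∈ V) :
    DifferentiableAt ℂ (fun y => ∮ ζ in C(c, R), Ψ (y, ζ)) x := by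
  obtain ⟨δ₂, hδ₂, hK⟩ := exists_closedBall_prod_subset_of_isOpen hV (isCompact_sphere c R) hx
  obtain ⟨δ, rfl⟩ : ∃ δ, δ₂ = 2 * δ := ⟨δ₂ / 2, by ring⟩
  have hδ : 0 < δ := by linarith
  obtain ⟨M, hM⟩ := ((isCompact_closedBall x (2 * δ)).prod
    (isCompact_sphere c R)).exists_bound_of_continuousOn (hΨ.continuousOn.mono hK)
  set γ := circleMap c R
  have hγ (θ : ℝ) : γ θ ∈ sphere c R := circleMap_mem_sphere c hR θ
  have hΨγ {y} (hy : y ∈ closedBall x (2 * δ)) (θ : ℝ) : DifferentiableAt ℂ Ψ (y, γ θ) :=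
    hΨ.differentiableAt (hV.mem_nhds (hK ⟨hy, hγ θ⟩))
  have hcont {y} (hy : y ∈ closedBall x (2 * δ)) : Continuous fun θ => deriv γ θ • Ψ (y, γ θ) := by
    simp only [γ, deriv_circleMap]
    exact ((continuous_circleMap 0 R).mul continuous_const).smul
      (hΨ.continuousOn.comp_continuous (continuous_const.prodMk (continuous_circleMap c R))
        fun θ => hK ⟨hy, hγ θ⟩)
  have hball {y} (hy : y ∈ ball x δ) : closedBall y δ ⊆ closedBall x (2 * δ) :=
    closedBall_subset_closedBall' (by linarith [mem_ball.1 hy])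
  have hx : x ∈ closedBall x (2 * δ) := mem_closedBall_self hδ₂.le
  have hmeas : AEStronglyMeasurable (fun θ => deriv γ θ • fderiv ℂ (fun y => Ψ (y, γ θ)) x)
      (volume.restrict (Ι 0 (2 * π))) := by
    simp only [γ, deriv_circleMap]
    exact (((continuous_circleMap 0 R).mul continuous_const).measurable.smul
      (measurable_fderiv_prodMk_left (measurable_circleMap c R) (hΨγ hx))).aestronglyMeasurable
  refine (intervalIntegral.hasFDerivAt_integral_of_dominated_of_fderiv_le (ball_mem_nhds x hδ)
    (eventually_of_mem (ball_mem_nhds x hδ) fun y hy =>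
      (hcont (hball hy (mem_closedBall_self hδ.le))).aestronglyMeasurable)
    ((hcont hx).intervalIntegrable _ _)
    (F' := fun y θ => deriv γ θ • fderiv ℂ (fun y => Ψ (y, γ θ)) y) hmeas
    (bound := fun _ => R * (M / δ)) ?_ intervalIntegrable_const ?_).differentiableAt
  · refine ae_of_all _ fun θ _ y hy => ?_
    rw [norm_smul, deriv_circleMap, norm_mul, norm_circleMap_zero, norm_I, mul_one,
      abs_of_nonneg hR]
    gcongr
    exact norm_fderiv_le_of_forall_mem_closedBall_norm_le hδ
      (fun z hz => ((hΨγ (hball hy hz) θ).comp z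
        (hasFDerivAt_prodMk_left z _).differentiableAt).differentiableWithinAt)
      fun z hz => hM _ ⟨hball hy hz, hγ θ⟩
  · exact ae_of_all _ fun θ _ y hy => (((hΨγ (hball hy (mem_closedBall_self hδ.le)) θ).comp y
      (hasFDerivAt_prodMk_left y _).differentiableAt).hasFDerivAt).fun_const_smul _

-- Used with `ε ≤ 1` only (the parity of `g`), so `1 - ε` does not truncate.
def descentIntegral (ε : ℕ) (g : ℂ → ℂ) (a : ℂ) (r : ℝ) : ℂ :=
  (2 * π * I)⁻¹ * ∮ ζ in C(0, r), ζ ^ (1 - ε) * (ζ ^ 2 - a)⁻¹ * g ζ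

theorem sq_sub_ne_zero_of_norm_lt {a ζ : ℂ} (h : ‖a‖ < ‖ζ‖ ^ 2) : ζ ^ 2 - a ≠ 0 := by
  rw [sub_ne_zero]
  rintro rfl
  simp at h

theorem descentIntegral_eq_of_le {ε : ℕ} {g : ℂ → ℂ} {R : ℝ} (hg : DifferentiableOn ℂ g (ball 0 R))
    {a : ℂ} {r₁ r₂ : ℝ} (h₀ : 0 < r₁) (ha : ‖a‖ < r₁ ^ 2) (h₁₂ : r₁ ≤ r₂) (h₂ : r₂ < R) :
    descentIntegral ε g a r₂ = descentIntegral ε g a r₁ := by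
  have hd : ∀ ζ ∈ closedBall (0 : ℂ) r₂ \ ball 0 r₁,
      DifferentiableAt ℂ (fun ζ => ζ ^ (1 - ε) * (ζ ^ 2 - a)⁻¹ * g ζ) ζ := by
    rintro ζ ⟨hζ₂, hζ₁⟩
    rw [mem_closedBall_zero_iff] at hζ₂
    rw [mem_ball_zero_iff, not_lt] at hζ₁
    have hne : ζ ^ 2 - a ≠ 0 := sq_sub_ne_zero_of_norm_lt (ha.trans_le (by gcongr))
    have hk : DifferentiableAt ℂ (fun ζ : ℂ => ζ ^ (1 - ε) * (ζ ^ 2 - a)⁻¹) ζ := by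
      fun_prop (disch := exact hne)
    exact hk.mul (hg.differentiableAt (isOpen_ball.mem_nhds (by simpa using hζ₂.trans_lt h₂)))
  unfold descentIntegral
  congr 1
  exact circleIntegral_eq_of_differentiable_on_annulus_off_countable h₀ h₁₂ countable_empty
    (fun ζ hζ => (hd ζ hζ).continuousAt.continuousWithinAt)
    fun ζ hζ => hd ζ ⟨ball_subset_closedBall hζ.1.1, fun h => hζ.1.2 (ball_subset_closedBall h)⟩

theorem descentIntegral_eq {ε : ℕ} {g : ℂ → ℂ} {R : ℝ} (hg : DifferentiableOn ℂ g (ball 0 R))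
    {a : ℂ} {r₁ r₂ : ℝ} (h₁ : 0 < r₁) (ha₁ : ‖a‖ < r₁ ^ 2) (hr₁ : r₁ < R)
    (h₂ : 0 < r₂) (ha₂ : ‖a‖ < r₂ ^ 2) (hr₂ : r₂ < R) :
    descentIntegral ε g a r₁ = descentIntegral ε g a r₂ := by
  rcases le_total r₁ r₂ with h | h
  · exact (descentIntegral_eq_of_le hg h₁ ha₁ h hr₂).symm
  · exact descentIntegral_eq_of_le hg h₂ ha₂ h hr₁

theorem descentIntegral_sq {ε : ℕ} (hε : ε ≤ 1) {g : ℂ → ℂ} {r : ℝ}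
    (hg : DiffContOnCl ℂ g (ball 0 r)) {s : ℂ} (hs : ‖s‖ < r) (hs₀ : s ≠ 0) :
    descentIntegral ε g (s ^ 2) r = (g s + (-1) ^ ε * g (-s)) / (2 * s ^ ε) := by
  have hr : 0 < r := (norm_nonneg s).trans_lt hs
  have hs' : ‖-s‖ < r := by rwa [norm_neg]
  have hne : ∀ t : ℂ, ‖t‖ < r → ∀ ζ ∈ sphere (0 : ℂ) r, ζ - t ≠ 0 := by
    rintro t ht ζ hζ h
    rw [sub_eq_zero.1 h, mem_sphere_zero_iff_norm] at hζ
    exact ht.ne hζ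
  have hgc : ContinuousOn g (sphere 0 r) :=
    hg.continuousOn.mono (sphere_subset_closedBall.trans (closure_ball 0 hr.ne').ge)
  have hint : ∀ t : ℂ, ‖t‖ < r → ∀ c : ℂ,
      CircleIntegrable (fun ζ => c * ((ζ - t)⁻¹ * g ζ)) 0 r := fun t ht c =>
    (continuousOn_const.mul (((continuousOn_id.sub continuousOn_const).inv₀ (hne t ht)).mul
      hgc)).circleIntegrable hr.le
  have hcauchy : ∀ t : ℂ, ‖t‖ < r → ∮ ζ in C(0, r), (ζ - t)⁻¹ * g ζ = 2 * π * I * g t :=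
    fun t ht => hg.circleIntegral_sub_inv_smul (by simpa using ht)
  have hsplit : EqOn (fun ζ => ζ ^ (1 - ε) * (ζ ^ 2 - s ^ 2)⁻¹ * g ζ)
      (fun ζ => (2 * s ^ ε)⁻¹ * ((ζ - s)⁻¹ * g ζ) + (-1) ^ ε / (2 * s ^ ε) * ((ζ - -s)⁻¹ * g ζ))
      (sphere 0 r) := by
    intro ζ hζ
    have h₁ := hne s hs ζ hζ
    have h₂ := hne (-s) hs' ζ hζ
    dsimp only
    rw [show ζ ^ 2 - s ^ 2 = (ζ - s) * (ζ - -s) by ring]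
    interval_cases ε <;> · field_simp; ring
  unfold descentIntegral
  rw [circleIntegral.integral_congr hr.le hsplit,
    circleIntegral.integral_add (hint s hs _) (hint (-s) hs' _), circleIntegral.integral_const_mul,
    circleIntegral.integral_const_mul, hcauchy s hs, hcauchy (-s) hs']
  field_simp

theorem differentiable_update_uncurry {𝕜 ι F : Type*} [NontriviallyNormedField 𝕜] [Fintype ι]
    [DecidableEq ι] [NormedAddCommGroup F] [NormedSpace 𝕜 F] (i : ι) :
    Differentiable 𝕜 fun p : (ι → F) × F => Function.update p.1 i p.2 := by
  refine differentiable_pi.2 fun j => ?_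
  rcases eq_or_ne j i with rfl | hj
  · simp only [Function.update_self]
    exact differentiable_snd
  · simp only [Function.update_of_ne hj]
    fun_prop

section Polydisc

variable {n : ℕ}

theorem isOpen_polydisc (n : ℕ) : IsOpen (Polydisc n) := by
  simpa only [Polydisc, Set.ofPred_forall] using
    isOpen_iInter_of_finite fun i => isOpen_lt (continuous_apply i).norm continuous_const

theorem update_mem_polydisc {z : Fin (n + 1) → ℂ} (hz : z ∈ Polydisc n) (i : Fin (n + 1)) {v : ℂ}
    (hv : ‖v‖ < 1) : Function.update z i v ∈ Polydisc n := by
  intro j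
  rcases eq_or_ne j i with rfl | hj
  · simpa using hv
  · simpa [Function.update_of_ne hj] using hz j

theorem pcov_mem_polydisc {z : Fin (n + 1) → ℂ} (hz : z ∈ Polydisc n) : pcov n z ∈ Polydisc n :=
  update_mem_polydisc hz _ (by simpa using pow_lt_one₀ (norm_nonneg _) (hz _) two_ne_zero)

theorem pcov_update_last (z : Fin (n + 1) → ℂ) (v : ℂ) :
    pcov n (Function.update z (Fin.last n) v) = Function.update z (Fin.last n) (v ^ 2) := by
  simp [pcov]

theorem differentiable_pcov : Differentiable ℂ (pcov n) :=
  (differentiable_update_uncurry (𝕜 := ℂ) (F := ℂ) (Fin.last n)).comp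
    (f := fun z : Fin (n + 1) → ℂ => (z, z (Fin.last n) ^ 2)) (by fun_prop)

theorem eqOn_polydisc_of_eqOn_last_ne_zero {F₁ F₂ : (Fin (n + 1) → ℂ) → ℂ}
    (h₁ : ContinuousOn F₁ (Polydisc n)) (h₂ : ContinuousOn F₂ (Polydisc n))
    (h : ∀ z ∈ Polydisc n, z (Fin.last n) ≠ 0 → F₁ z = F₂ z) : EqOn F₁ F₂ (Polydisc n) :=
  EqOn.of_subset_closure (s := Polydisc n ∩ Function.eval (Fin.last n) ⁻¹' {0}ᶜ)
    (fun z hz => h z hz.1 hz.2) h₁ h₂ inter_subset_left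
    (((dense_compl_singleton 0).preimage (isOpenMap_eval _)).open_subset_closure_inter
      (isOpen_polydisc n))

end Polydisc

def descentRadius (a : ℂ) : ℝ := √((1 + ‖a‖) / 2)

theorem descentRadius_pos (a : ℂ) : 0 < descentRadius a :=
  Real.sqrt_pos.2 (by positivity)

theorem descentRadius_lt_one {a : ℂ} (ha : ‖a‖ < 1) : descentRadius a < 1 :=
  (Real.sqrt_lt' one_pos).2 (by linarith)

theorem norm_lt_descentRadius_sq {a : ℂ} (ha : ‖a‖ < 1) : ‖a‖ < descentRadius a ^ 2 := by
  rw [descentRadius, Real.sq_sqrt (by positivity)]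
  linarith

section Descent

variable {n : ℕ} {G : (Fin (n + 1) → ℂ) → ℂ}

theorem DifferentiableOn.comp_update_last (hG : DifferentiableOn ℂ G (Polydisc n))
    {w : Fin (n + 1) → ℂ} (hw : w ∈ Polydisc n) :
    DifferentiableOn ℂ (fun ζ => G (Function.update w (Fin.last n) ζ)) (ball 0 1) :=
  hG.comp (fun ζ _ => (hasFDerivAt_update w ζ).differentiableAt.differentiableWithinAt)
    fun ζ hζ => update_mem_polydisc hw _ (by simpa using hζ)

theorem differentiableAt_descentIntegral (ε : ℕ) (hG : DifferentiableOn ℂ G (Polydisc n))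
    {w₀ : Fin (n + 1) → ℂ} (hw₀ : w₀ ∈ Polydisc n) {ρ : ℝ} (hρ₀ : 0 ≤ ρ) (hρ₁ : ρ < 1)
    (hw₀ρ : ‖w₀ (Fin.last n)‖ < ρ ^ 2) :
    DifferentiableAt ℂ (fun w => descentIntegral ε (fun ζ => G (Function.update w (Fin.last n) ζ))
      (w (Fin.last n)) ρ) w₀ := by
  let V : Set ((Fin (n + 1) → ℂ) × ℂ) :=
    {p | Function.update p.1 (Fin.last n) p.2 ∈ Polydisc n ∧ p.2 ^ 2 - p.1 (Fin.last n) ≠ 0}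
  have hupd := differentiable_update_uncurry (𝕜 := ℂ) (F := ℂ) (Fin.last n)
  have hV : IsOpen V := ((isOpen_polydisc n).preimage hupd.continuous).inter
    (isOpen_ne_fun (by fun_prop) continuous_const)
  have hΨ : DifferentiableOn ℂ (fun p : (Fin (n + 1) → ℂ) × ℂ => p.2 ^ (1 - ε) *
      (p.2 ^ 2 - p.1 (Fin.last n))⁻¹ * G (Function.update p.1 (Fin.last n) p.2)) V := by
    refine DifferentiableOn.mul ?_ (hG.comp hupd.differentiableOn fun p hp => hp.1)
    exact fun p hp => (by fun_prop (disch := exact hp.2) :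
      DifferentiableAt ℂ (fun p : (Fin (n + 1) → ℂ) × ℂ =>
        p.2 ^ (1 - ε) * (p.2 ^ 2 - p.1 (Fin.last n))⁻¹) p).differentiableWithinAt
  refine (differentiableAt_circleIntegral_of_differentiableOn hV hΨ hρ₀ fun ζ hζ => ?_).const_mul _
  rw [mem_sphere_zero_iff_norm] at hζ
  exact ⟨update_mem_polydisc hw₀ _ (hζ.trans_lt hρ₁),
    sq_sub_ne_zero_of_norm_lt (by rwa [hζ])⟩

def descent (n ε : ℕ) (G : (Fin (n + 1) → ℂ) → ℂ) (w : Fin (n + 1) → ℂ) : ℂ :=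
  descentIntegral ε (fun ζ => G (Function.update w (Fin.last n) ζ)) (w (Fin.last n))
    (descentRadius (w (Fin.last n)))

theorem differentiableOn_descent (ε : ℕ) (hG : DifferentiableOn ℂ G (Polydisc n)) :
    DifferentiableOn ℂ (descent n ε G) (Polydisc n) := by
  intro w₀ hw₀
  set ρ := descentRadius (w₀ (Fin.last n))
  have hρ₁ : ρ < 1 := descentRadius_lt_one (hw₀ _)
  have hnhds : {w : Fin (n + 1) → ℂ | ‖w (Fin.last n)‖ < ρ ^ 2} ∩ Polydisc n ∈ 𝓝 w₀ :=
    ((isOpen_lt (continuous_apply _).norm continuous_const).inter (isOpen_polydisc n)).mem_nhds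
      ⟨norm_lt_descentRadius_sq (hw₀ _), hw₀⟩
  refine ((differentiableAt_descentIntegral ε hG hw₀ (descentRadius_pos _).le hρ₁
    (norm_lt_descentRadius_sq (hw₀ _))).congr_of_eventuallyEq ?_).differentiableWithinAt
  filter_upwards [hnhds] with w ⟨hwρ, hw⟩
  exact descentIntegral_eq (hG.comp_update_last hw) (descentRadius_pos _)
    (norm_lt_descentRadius_sq (hw _)) (descentRadius_lt_one (hw _)) (descentRadius_pos _)
    hwρ hρ₁

theorem descent_pcov_mul_pow {ε : ℕ} (hε : ε ≤ 1) (hG : DifferentiableOn ℂ G (Polydisc n))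
    (hsym : ∀ z ∈ Polydisc n,
      G (Function.update z (Fin.last n) (-z (Fin.last n))) = (-1) ^ ε * G z)
    {z : Fin (n + 1) → ℂ} (hz : z ∈ Polydisc n) (hz₀ : z (Fin.last n) ≠ 0) :
    descent n ε G (pcov n z) * z (Fin.last n) ^ ε = G z := by
  set s := z (Fin.last n)
  have hlast : pcov n z (Fin.last n) = s ^ 2 := by simp [pcov, s]
  have hρ₁ := descentRadius_lt_one (pcov_mem_polydisc hz (Fin.last n))
  have hsρ : ‖s‖ < descentRadius (s ^ 2) := by
    refine lt_of_pow_lt_pow_left₀ 2 (descentRadius_pos _).le ?_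
    rw [← norm_pow, ← hlast]
    exact norm_lt_descentRadius_sq (pcov_mem_polydisc hz _)
  have hslice : (fun ζ => G (Function.update (pcov n z) (Fin.last n) ζ)) =
      fun ζ => G (Function.update z (Fin.last n) ζ) := by
    simp [pcov]
  have hsign : ((-1 : ℂ) ^ ε) * (-1) ^ ε = 1 := by
    rw [← mul_pow, neg_one_mul, neg_neg, one_pow]
  rw [descent, hlast, hslice, descentIntegral_sq hε ((hG.comp_update_last hz).diffContOnCl_ball
    (closedBall_subset_ball (hlast ▸ hρ₁))) hsρ hz₀, Function.update_eq_self, hsym z hz,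
    ← mul_assoc, hsign]
  field_simp
  ring

end Descent

theorem pow_eq_pow_mod_two_mul_sq_pow_div_two {M : Type*} [Monoid M] (s : M) (m : ℕ) :
    s ^ m = s ^ (m % 2) * (s ^ 2) ^ (m / 2) := by
  rw [← pow_mul, ← pow_add, Nat.mod_add_div]

section Pullback

variable {n : ℕ} {f : (Fin (n + 1) → ℂ) → ℂ}

theorem ExtendsHol.pullback {m : ℕ} (hf : ExtendsHol n fun z => z (Fin.last n) ^ (m / 2) * f z) :
    ExtendsHol n fun z => (2 * z (Fin.last n)) ^ m * f (pcov n z) := by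
  obtain ⟨F, hF, hFf⟩ := hf
  dsimp only at hFf
  refine ⟨fun z => 2 ^ m * z (Fin.last n) ^ (m % 2) * F (pcov n z), ?_, fun z hz hz₀ => ?_⟩
  · exact (by fun_prop : Differentiable ℂ fun z : Fin (n + 1) → ℂ =>
      2 ^ m * z (Fin.last n) ^ (m % 2)).differentiableOn.mul
      (hF.comp differentiable_pcov.differentiableOn fun z hz => pcov_mem_polydisc hz)
  have hlast : pcov n z (Fin.last n) = z (Fin.last n) ^ 2 := by simp [pcov]
  dsimp only
  rw [hFf _ (pcov_mem_polydisc hz) (by simpa [hlast] using hz₀), hlast, mul_pow,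
    pow_eq_pow_mod_two_mul_sq_pow_div_two (z (Fin.last n)) m]
  ring

theorem apply_update_neg_last_of_pullback {m : ℕ} {G : (Fin (n + 1) → ℂ) → ℂ}
    (hG : ContinuousOn G (Polydisc n))
    (hGf : ∀ z ∈ Polydisc n, z (Fin.last n) ≠ 0 → G z = (2 * z (Fin.last n)) ^ m * f (pcov n z))
    {z : Fin (n + 1) → ℂ} (hz : z ∈ Polydisc n) :
    G (Function.update z (Fin.last n) (-z (Fin.last n))) = (-1) ^ m * G z := by
  have hmaps : MapsTo (fun z => Function.update z (Fin.last n) (-z (Fin.last n))) (Polydisc n)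
      (Polydisc n) := fun z hz => update_mem_polydisc hz _ (by simpa using hz _)
  refine eqOn_polydisc_of_eqOn_last_ne_zero (F₂ := fun z => (-1) ^ m * G z)
    (hG.comp (by fun_prop) hmaps) (continuousOn_const.mul hG) (fun z hz hz₀ => ?_) hz
  dsimp only [Function.comp_apply]
  rw [hGf _ (hmaps hz) (by simpa using hz₀), hGf z hz hz₀]
  dsimp only
  rw [pcov_update_last, neg_sq, ← pcov_update_last, Function.update_eq_self,
    Function.update_self, mul_neg, neg_pow]
  ring

theorem ExtendsHol.of_pullback {m : ℕ}
    (hf : ExtendsHol n fun z => (2 * z (Fin.last n)) ^ m * f (pcov n z)) :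
    ExtendsHol n fun z => z (Fin.last n) ^ (m / 2) * f z := by
  obtain ⟨G, hG, hGf⟩ := hf
  dsimp only at hGf
  have hsym (z) (hz : z ∈ Polydisc n) :
      G (Function.update z (Fin.last n) (-z (Fin.last n))) = (-1) ^ (m % 2) * G z := by
    rw [← neg_one_pow_eq_pow_mod_two]
    exact apply_update_neg_last_of_pullback hG.continuousOn hGf hz
  refine ⟨fun w => (2 ^ m)⁻¹ * descent n (m % 2) G w,
    (differentiableOn_descent _ hG).const_mul _, fun w hw hw₀ => ?_⟩
  obtain ⟨s, hs⟩ := IsAlgClosed.exists_pow_nat_eq (w (Fin.last n)) two_pos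
  have hs₀ : s ≠ 0 := by rintro rfl; exact hw₀ (by simp [← hs])
  have hz : Function.update w (Fin.last n) s ∈ Polydisc n :=
    update_mem_polydisc hw _ (lt_of_pow_lt_pow_left₀ 2 zero_le_one
      (by simpa [← hs, norm_pow] using hw (Fin.last n)))
  have hpcov : pcov n (Function.update w (Fin.last n) s) = w := by
    rw [pcov_update_last, hs, Function.update_eq_self]
  have hdescent := descent_pcov_mul_pow (by omega) hG hsym hz (by simpa using hs₀)
  rw [hGf _ hz (by simpa using hs₀), hpcov, Function.update_self, mul_pow,
    pow_eq_pow_mod_two_mul_sq_pow_div_two s m, hs] at hdescent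
  refine mul_right_cancel₀ (pow_ne_zero (m % 2) hs₀) ?_
  dsimp only
  rw [mul_assoc, hdescent]
  field_simp

theorem extendsHol_pullback_iff (m : ℕ) :
    (ExtendsHol n fun z => (2 * z (Fin.last n)) ^ m * f (pcov n z)) ↔
      ExtendsHol n fun z => z (Fin.last n) ^ (m / 2) * f z :=
  ⟨ExtendsHol.of_pullback, ExtendsHol.pullback⟩

end Pullback

theorem pullback_holomorphic_iff_order_general (n k : ℕ)
    (w : Fin (n + 1) → ((Fin (n + 1) → ℂ) → ℂ)) :
    (∀ j : Fin (n + 1), ExtendsHol n (fun z =>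
        (2 * z (Fin.last n)) ^ (if j = Fin.last n then k + 1 else k) * w j (pcov n z))) ↔
      (ExtendsHol n (fun z => (z (Fin.last n)) ^ ((k + 1) / 2) * w (Fin.last n) z) ∧
        ∀ j ≠ Fin.last n, ExtendsHol n (fun z => (z (Fin.last n)) ^ (k / 2) * w j z)) := by
  simp only [extendsHol_pullback_iff]
  constructor
  · intro h
    exact ⟨by simpa using h (Fin.last n), fun j hj => by simpa [hj] using h j⟩
  · rintro ⟨hlast, hother⟩ j
    by_cases hj : j = Fin.last n
    · subst hj
      simpa using hlast
    · simpa [hj] using hother j hj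

/-- For a tensor `ω = Σ_j ω_j dz^j ⊗ (dz¹∧⋯∧dzⁿ)^{⊗k}` with coefficients
holomorphic off `{zⁿ = 0}` and meromorphic along it, the pullback `p*ω` (whose
coefficients are `(p*ω)_n = (2zⁿ)^{k+1}·ω_n∘p` and `(p*ω)_j = (2zⁿ)^k·ω_j∘p`)
extends holomorphically to the polydisc if and only if
`ord(ω_n,{zⁿ=0}) ≥ −⌊(k+1)/2⌋` and `ord(ω_j,{zⁿ=0}) ≥ −⌊k/2⌋` for `j ≠ n`. -/
theorem pullback_holomorphic_iff_order (n k : ℕ)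
    (w : Fin (n + 1) → ((Fin (n + 1) → ℂ) → ℂ))
    (h_hol : ∀ j, DifferentiableOn ℂ (w j)
      (Polydisc n ∩ {z | z (Fin.last n) ≠ 0}))
    (h_mero : ∀ j, ∃ m : ℕ, ExtendsHol n (fun z => (z (Fin.last n)) ^ m * w j z)) :
    (∀ j : Fin (n + 1), ExtendsHol n (fun z =>
        (2 * z (Fin.last n)) ^ (if j = Fin.last n then k + 1 else k) * w j (pcov n z))) ↔
      (ExtendsHol n (fun z => (z (Fin.last n)) ^ ((k + 1) / 2) * w (Fin.last n) z) ∧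
        ∀ j ≠ Fin.last n, ExtendsHol n (fun z => (z (Fin.last n)) ^ (k / 2) * w j z)) :=
  pullback_holomorphic_iff_order_general n k w
end
end
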